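/- For every n ≥ 2, the Thomas-Walls graph T_n contains exactly two edges that lie in more than one triangle, and exactly two 4-cycles C possessing a diagonal (an edge of T_n joining two vertices that are non-consecutive on C); these 4-cycles are C_1 = u_1u_2u_3u_4 with diagonal u_1u_3 and C_2 = v_1v_2v_3v_4 with diagonal v_1v_3. -/
import Mathlib


open SimpleGraph

set_option maxHeartbeats 1600000

/-- Pairs of natural numbers encoding the edges of the Thomas-Walls graph `T_n`.
The recursive construction (T_1 = K_4; T_{m+1} obtained from T_m by deleting the edge
`a_m b_m`, which lies in two triangles, and adding vertices `x_m, y_m, z_m` with edges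
`a_m x_m, b_m y_m, b_m z_m, x_m y_m, x_m z_m, y_m z_m`) is realized explicitly with
vertex `0 = c`, `1 = d`, `3k-1 = a_k`, `3k = b_k`, `3k+1 = x_k`, where `a_{k+1} = y_k`
and `b_{k+1} = z_k`; `T_1` is `K_4` on `{c, d, a_1, b_1}`. -/
def twPairs (n : ℕ) : Set (ℕ × ℕ) :=
  {p | p = (0, 2) ∨ p = (0, 3) ∨ p = (1, 2) ∨ p = (1, 3) ∨ p = (0, 1) ∨
       p = (3 * n - 1, 3 * n) ∨
       ∃ k, 1 ≤ k ∧ k < n ∧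
         (p = (3 * k - 1, 3 * k + 1) ∨ p = (3 * k, 3 * k + 2) ∨ p = (3 * k, 3 * k + 3) ∨
          p = (3 * k + 1, 3 * k + 2) ∨ p = (3 * k + 1, 3 * k + 3))}

/-- The Thomas-Walls graph `T_n` (for `n ≥ 1`), on the `3n + 1` vertices `0, …, 3n`. -/
def thomasWalls (n : ℕ) : SimpleGraph (Fin (3 * n + 1)) :=
  SimpleGraph.fromRel fun i j => ((i : ℕ), (j : ℕ)) ∈ twPairs n

/-- The reduced Thomas-Walls graph `T'_n = T_n − {u₁u₃, v₁v₃}` (for `n ≥ 2`). -/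
def reducedThomasWalls (n : ℕ) : SimpleGraph (Fin (3 * n + 1)) :=
  SimpleGraph.fromRel fun i j =>
    ((i : ℕ), (j : ℕ)) ∈ twPairs n \ ({(0, 1), (3 * n - 1, 3 * n)} : Set (ℕ × ℕ))

/-- The vertex of `T_n` with index `k` (for `k ≤ 3n`). -/
def twV (n k : ℕ) : Fin (3 * n + 1) := ⟨k % (3 * n + 1), Nat.mod_lt _ (by omega)⟩

/-- `u₁ = c`: a vertex of the 4-cycle `C₁ = u₁u₂u₃u₄` of `T_n` with `u₁u₃ ∈ E(T_n)`. -/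
def tw_u1 (n : ℕ) : Fin (3 * n + 1) := twV n 0
/-- `u₂ = a₁`. -/
def tw_u2 (n : ℕ) : Fin (3 * n + 1) := twV n 2
/-- `u₃ = d`. -/
def tw_u3 (n : ℕ) : Fin (3 * n + 1) := twV n 1
/-- `u₄ = b₁`. -/
def tw_u4 (n : ℕ) : Fin (3 * n + 1) := twV n 3
/-- `v₁ = y_{n-1}`: a vertex of the 4-cycle `C₂ = v₁v₂v₃v₄` of `T_n` with `v₁v₃ ∈ E(T_n)`. -/
def tw_v1 (n : ℕ) : Fin (3 * n + 1) := twV n (3 * n - 1)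
/-- `v₂ = x_{n-1}`. -/
def tw_v2 (n : ℕ) : Fin (3 * n + 1) := twV n (3 * n - 2)
/-- `v₃ = z_{n-1}`. -/
def tw_v3 (n : ℕ) : Fin (3 * n + 1) := twV n (3 * n)
/-- `v₄ = b_{n-1}`. -/
def tw_v4 (n : ℕ) : Fin (3 * n + 1) := twV n (3 * n - 3)

def Q2 (m l i j : ℕ) : Prop :=
  (i = 0 ∧ j = 2) ∨ (i = 0 ∧ j = 3) ∨ (i = 1 ∧ j = 2) ∨ (i = 1 ∧ j = 3) ∨ (i = 0 ∧ j = 1) ∨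
  (i = 3*m + 5 ∧ j = 3*m + 6) ∨
  (l ≤ m ∧
    ((i = 3*l+2 ∧ j = 3*l+4) ∨ (i = 3*l+3 ∧ j = 3*l+5) ∨ (i = 3*l+3 ∧ j = 3*l+6) ∨
     (i = 3*l+4 ∧ j = 3*l+5) ∨ (i = 3*l+4 ∧ j = 3*l+6)))

lemma mem_twPairs2 {m i j : ℕ} : (i, j) ∈ twPairs (m+2) ↔ ∃ l, Q2 m l i j := by
  simp only [twPairs, Set.mem_setOf_eq, Prod.mk.injEq]
  constructor
  · rintro (h | h | h | h | h | h | ⟨k, hk1, hk2, (h | h | h | h | h)⟩)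
    · exact ⟨0, Or.inl h⟩
    · exact ⟨0, Or.inr (Or.inl h)⟩
    · exact ⟨0, Or.inr (Or.inr (Or.inl h))⟩
    · exact ⟨0, Or.inr (Or.inr (Or.inr (Or.inl h)))⟩
    · exact ⟨0, Or.inr (Or.inr (Or.inr (Or.inr (Or.inl h))))⟩
    · exact ⟨0, Or.inr (Or.inr (Or.inr (Or.inr (Or.inr (Or.inl ⟨by omega, by omega⟩)))))⟩
    · exact ⟨k-1, Or.inr (Or.inr (Or.inr (Or.inr (Or.inr (Or.inr
        ⟨by omega, Or.inl ⟨by omega, by omega⟩⟩)))))⟩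
    · exact ⟨k-1, Or.inr (Or.inr (Or.inr (Or.inr (Or.inr (Or.inr
        ⟨by omega, Or.inr (Or.inl ⟨by omega, by omega⟩)⟩)))))⟩
    · exact ⟨k-1, Or.inr (Or.inr (Or.inr (Or.inr (Or.inr (Or.inr
        ⟨by omega, Or.inr (Or.inr (Or.inl ⟨by omega, by omega⟩))⟩)))))⟩
    · exact ⟨k-1, Or.inr (Or.inr (Or.inr (Or.inr (Or.inr (Or.inr
        ⟨by omega, Or.inr (Or.inr (Or.inr (Or.inl ⟨by omega, by omega⟩)))⟩)))))⟩
    · exact ⟨k-1, Or.inr (Or.inr (Or.inr (Or.inr (Or.inr (Or.inr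
        ⟨by omega, Or.inr (Or.inr (Or.inr (Or.inr ⟨by omega, by omega⟩)))⟩)))))⟩
  · rintro ⟨l, (h | h | h | h | h | h | ⟨hl, (h | h | h | h | h)⟩)⟩
    · exact Or.inl h
    · exact Or.inr (Or.inl h)
    · exact Or.inr (Or.inr (Or.inl h))
    · exact Or.inr (Or.inr (Or.inr (Or.inl h)))
    · exact Or.inr (Or.inr (Or.inr (Or.inr (Or.inl h))))
    · exact Or.inr (Or.inr (Or.inr (Or.inr (Or.inr (Or.inl ⟨by omega, by omega⟩)))))
    · exact Or.inr (Or.inr (Or.inr (Or.inr (Or.inr (Or.inr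
        ⟨l+1, by omega, by omega, Or.inl ⟨by omega, by omega⟩⟩)))))
    · exact Or.inr (Or.inr (Or.inr (Or.inr (Or.inr (Or.inr
        ⟨l+1, by omega, by omega, Or.inr (Or.inl ⟨by omega, by omega⟩)⟩)))))
    · exact Or.inr (Or.inr (Or.inr (Or.inr (Or.inr (Or.inr
        ⟨l+1, by omega, by omega, Or.inr (Or.inr (Or.inl ⟨by omega, by omega⟩))⟩)))))
    · exact Or.inr (Or.inr (Or.inr (Or.inr (Or.inr (Or.inr
        ⟨l+1, by omega, by omega, Or.inr (Or.inr (Or.inr (Or.inl ⟨by omega, by omega⟩)))⟩)))))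
    · exact Or.inr (Or.inr (Or.inr (Or.inr (Or.inr (Or.inr
        ⟨l+1, by omega, by omega, Or.inr (Or.inr (Or.inr (Or.inr ⟨by omega, by omega⟩)))⟩)))))

lemma adjQ {m : ℕ} {i j : Fin (3 * (m+2) + 1)} :
    (thomasWalls (m+2)).Adj i j ↔
      ((i : ℕ) ≠ (j : ℕ) ∧ ((∃ l, Q2 m l i j) ∨ (∃ l, Q2 m l j i))) := by
  rw [thomasWalls, fromRel_adj, mem_twPairs2, mem_twPairs2]
  constructor
  · rintro ⟨h1, h2⟩; exact ⟨fun h => h1 (Fin.ext h), h2⟩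
  · rintro ⟨h1, h2⟩; exact ⟨fun h => h1 (congrArg Fin.val h), h2⟩

lemma Rlow {m v w : ℕ} (hv : v ≤ 1)
    (hE : (∃ l, Q2 m l w v) ∨ (∃ l, Q2 m l v w)) : w ≤ 3 ∧ w ≠ v := by
  obtain ⟨l, h⟩ | ⟨l, h⟩ := hE <;> unfold Q2 at h <;>
    rcases h with h|h|h|h|h|h|⟨hl, (h|h|h|h|h)⟩ <;> omega

lemma R2 {m l v w : ℕ} (hv : v = 3*l+2)
    (hE : (∃ l, Q2 m l w v) ∨ (∃ l, Q2 m l v w)) :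
    (l = 0 ∧ w ≤ 1) ∨ (1 ≤ l ∧ l ≤ m ∧ 3*l ≤ w ∧ w ≤ 3*l+1) ∨
    (l ≤ m ∧ w = 3*l+4) ∨ (l = m+1 ∧ 3*m+3 ≤ w ∧ w ≤ 3*m+4) ∨ (l = m+1 ∧ w = 3*m+6) := by
  obtain ⟨k, h⟩ | ⟨k, h⟩ := hE <;> unfold Q2 at h <;>
    rcases h with h|h|h|h|h|h|⟨hk, (h|h|h|h|h)⟩ <;> omega

lemma R0 {m l v w : ℕ} (hv : v = 3*l+3)
    (hE : (∃ l, Q2 m l w v) ∨ (∃ l, Q2 m l v w)) :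
    (l = 0 ∧ w ≤ 1) ∨ (1 ≤ l ∧ 3*l ≤ w ∧ w ≤ 3*l+1) ∨
    (l ≤ m ∧ 3*l+5 ≤ w ∧ w ≤ 3*l+6) ∨ (l = m+1 ∧ w = 3*m+5) := by
  obtain ⟨k, h⟩ | ⟨k, h⟩ := hE <;> unfold Q2 at h <;>
    rcases h with h|h|h|h|h|h|⟨hk, (h|h|h|h|h)⟩ <;> omega

lemma R1 {m l v w : ℕ} (hv : v = 3*l+4)
    (hE : (∃ l, Q2 m l w v) ∨ (∃ l, Q2 m l v w)) :
    (l ≤ m ∧ w = 3*l+2) ∨ (l ≤ m ∧ 3*l+5 ≤ w ∧ w ≤ 3*l+6) := by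
  obtain ⟨k, h⟩ | ⟨k, h⟩ := hE <;> unfold Q2 at h <;>
    rcases h with h|h|h|h|h|h|⟨hk, (h|h|h|h|h)⟩ <;> omega
lemma CN {m x y w : ℕ}
    (hxy : ∃ l, Q2 m l x y)
    (hwx : (∃ l, Q2 m l w x) ∨ (∃ l, Q2 m l x w))
    (hwy : (∃ l, Q2 m l w y) ∨ (∃ l, Q2 m l y w)) :
    (x = 0 ∧ y = 1 ∧ 2 ≤ w ∧ w ≤ 3) ∨
    (x = 3*m+5 ∧ y = 3*m+6 ∧ 3*m+3 ≤ w ∧ w ≤ 3*m+4) ∨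
    (x ≤ 1 ∧ 2 ≤ y ∧ y ≤ 3 ∧ w ≤ 1) ∨
    (3*m+3 ≤ x ∧ 3*m+5 ≤ y ∧ y ≤ 3*m+6 ∧ 3*m+5 ≤ w ∧ w ≤ 3*m+6) := by
  obtain ⟨l1, h1⟩ := hxy
  unfold Q2 at h1
  rcases h1 with ⟨hx, hy⟩|⟨hx, hy⟩|⟨hx, hy⟩|⟨hx, hy⟩|⟨hx, hy⟩|⟨hx, hy⟩|⟨hl, h1⟩
  · have a1 := Rlow (v := x) (by omega) hwx
    have a2 := R2 (l := 0) (v := y) (by omega) hwy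
    omega
  · have a1 := Rlow (v := x) (by omega) hwx
    have a2 := R0 (l := 0) (v := y) (by omega) hwy
    omega
  · have a1 := Rlow (v := x) (by omega) hwx
    have a2 := R2 (l := 0) (v := y) (by omega) hwy
    omega
  · have a1 := Rlow (v := x) (by omega) hwx
    have a2 := R0 (l := 0) (v := y) (by omega) hwy
    omega
  · have a1 := Rlow (v := x) (by omega) hwx
    have a2 := Rlow (v := y) (by omega) hwy
    omega
  · have a1 := R2 (l := m+1) (v := x) (by omega) hwx
    have a2 := R0 (l := m+1) (v := y) (by omega) hwy
    omega
  · rcases h1 with ⟨hx, hy⟩|⟨hx, hy⟩|⟨hx, hy⟩|⟨hx, hy⟩|⟨hx, hy⟩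
    · have a1 := R2 (l := l1) (v := x) (by omega) hwx
      have a2 := R1 (l := l1) (v := y) (by omega) hwy
      omega
    · have a1 := R0 (l := l1) (v := x) (by omega) hwx
      have a2 := R2 (l := l1+1) (v := y) (by omega) hwy
      omega
    · have a1 := R0 (l := l1) (v := x) (by omega) hwx
      have a2 := R0 (l := l1+1) (v := y) (by omega) hwy
      omega
    · have a1 := R1 (l := l1) (v := x) (by omega) hwx
      have a2 := R2 (l := l1+1) (v := y) (by omega) hwy
      omega
    · have a1 := R1 (l := l1) (v := x) (by omega) hwx
      have a2 := R0 (l := l1+1) (v := y) (by omega) hwy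
      omega

lemma CN2 {m x y w w' : ℕ}
    (hD : (x = 0 ∧ y = 1 ∧ 2 ≤ w ∧ w ≤ 3) ∨
      (x = 3*m+5 ∧ y = 3*m+6 ∧ 3*m+3 ≤ w ∧ w ≤ 3*m+4) ∨
      (x ≤ 1 ∧ 2 ≤ y ∧ y ≤ 3 ∧ w ≤ 1) ∨
      (3*m+3 ≤ x ∧ 3*m+5 ≤ y ∧ y ≤ 3*m+6 ∧ 3*m+5 ≤ w ∧ w ≤ 3*m+6))
    (hD' : (x = 0 ∧ y = 1 ∧ 2 ≤ w' ∧ w' ≤ 3) ∨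
      (x = 3*m+5 ∧ y = 3*m+6 ∧ 3*m+3 ≤ w' ∧ w' ≤ 3*m+4) ∨
      (x ≤ 1 ∧ 2 ≤ y ∧ y ≤ 3 ∧ w' ≤ 1) ∨
      (3*m+3 ≤ x ∧ 3*m+5 ≤ y ∧ y ≤ 3*m+6 ∧ 3*m+5 ≤ w' ∧ w' ≤ 3*m+6))
    (hww' : w ≠ w') (hwx : w ≠ x) (hwy : w ≠ y) (hw'x : w' ≠ x) (hw'y : w' ≠ y) :
    (x = 0 ∧ y = 1 ∧ 2 ≤ w ∧ w ≤ 3 ∧ 2 ≤ w' ∧ w' ≤ 3) ∨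
    (x = 3*m+5 ∧ y = 3*m+6 ∧ 3*m+3 ≤ w ∧ w ≤ 3*m+4 ∧ 3*m+3 ≤ w' ∧ w' ≤ 3*m+4) := by
  omega


lemma twV_val {n k : ℕ} (h : k ≤ 3 * n) : (twV n k : ℕ) = k := Nat.mod_eq_of_lt (by omega)

lemma mem4_iff {N : ℕ} {a b c d z : Fin N} :
    (z = a ∨ z = b ∨ z = c ∨ z = d) ↔
      ((z:ℕ) = a ∨ (z:ℕ) = b ∨ (z:ℕ) = c ∨ (z:ℕ) = d) := by
  constructor
  · rintro (rfl | rfl | rfl | rfl) <;> simp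
  · rintro (h | h | h | h)
    exacts [Or.inl (Fin.ext h), Or.inr (Or.inl (Fin.ext h)),
      Or.inr (Or.inr (Or.inl (Fin.ext h))), Or.inr (Or.inr (Or.inr (Fin.ext h)))]

lemma set4_eq {N : ℕ} {a b c d p q r s : Fin N}
    (h : ∀ t : ℕ, (t = a ∨ t = b ∨ t = c ∨ t = d) ↔ (t = p ∨ t = q ∨ t = r ∨ t = s)) :
    ({a, b, c, d} : Set (Fin N)) = {p, q, r, s} := by
  ext z
  simp only [Set.mem_insert_iff, Set.mem_singleton_iff]
  rw [mem4_iff, mem4_iff]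
  exact h z

/-- For `n ≥ 2`, the Thomas-Walls graph `T_n` contains exactly two edges lying in more
than one triangle, namely `u₁u₃` and `v₁v₃`, and exactly two 4-cycles possessing a
diagonal, namely `C₁ = u₁u₂u₃u₄` with diagonal `u₁u₃` and `C₂ = v₁v₂v₃v₄` with
diagonal `v₁v₃`. -/
theorem thomasWalls_two_diagonals (n : ℕ) (hn : 2 ≤ n) :
    -- exactly two edges lie in more than one triangle: u₁u₃ and v₁v₃
    ({e : Sym2 (Fin (3 * n + 1)) | e ∈ (thomasWalls n).edgeSet ∧
        ∃ w w' : Fin (3 * n + 1), w ≠ w' ∧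
          (∀ x ∈ e, (thomasWalls n).Adj w x) ∧ (∀ x ∈ e, (thomasWalls n).Adj w' x)}
      = {s(tw_u1 n, tw_u3 n), s(tw_v1 n, tw_v3 n)}) ∧
    s(tw_u1 n, tw_u3 n) ≠ s(tw_v1 n, tw_v3 n) ∧
    -- C₁ = u₁u₂u₃u₄ is a 4-cycle with diagonal u₁u₃
    (thomasWalls n).Adj (tw_u1 n) (tw_u2 n) ∧ (thomasWalls n).Adj (tw_u2 n) (tw_u3 n) ∧
    (thomasWalls n).Adj (tw_u3 n) (tw_u4 n) ∧ (thomasWalls n).Adj (tw_u4 n) (tw_u1 n) ∧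
    (thomasWalls n).Adj (tw_u1 n) (tw_u3 n) ∧
    -- C₂ = v₁v₂v₃v₄ is a 4-cycle with diagonal v₁v₃
    (thomasWalls n).Adj (tw_v1 n) (tw_v2 n) ∧ (thomasWalls n).Adj (tw_v2 n) (tw_v3 n) ∧
    (thomasWalls n).Adj (tw_v3 n) (tw_v4 n) ∧ (thomasWalls n).Adj (tw_v4 n) (tw_v1 n) ∧
    (thomasWalls n).Adj (tw_v1 n) (tw_v3 n) ∧
    ({tw_u1 n, tw_u2 n, tw_u3 n, tw_u4 n} : Set (Fin (3 * n + 1)))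
      ≠ {tw_v1 n, tw_v2 n, tw_v3 n, tw_v4 n} ∧
    -- every 4-cycle possessing a diagonal is C₁ or C₂
    (∀ a b c d : Fin (3 * n + 1), a ≠ b → a ≠ c → a ≠ d → b ≠ c → b ≠ d → c ≠ d →
      (thomasWalls n).Adj a b → (thomasWalls n).Adj b c → (thomasWalls n).Adj c d →
      (thomasWalls n).Adj d a → ((thomasWalls n).Adj a c ∨ (thomasWalls n).Adj b d) →
      ({a, b, c, d} : Set (Fin (3 * n + 1))) = {tw_u1 n, tw_u2 n, tw_u3 n, tw_u4 n} ∨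
      ({a, b, c, d} : Set (Fin (3 * n + 1))) = {tw_v1 n, tw_v2 n, tw_v3 n, tw_v4 n}) := by
  obtain ⟨m, rfl⟩ : ∃ m, n = m + 2 := ⟨n - 2, by omega⟩
  have hu1 : (tw_u1 (m+2) : ℕ) = 0 := by unfold tw_u1; exact twV_val (by omega)
  have hu2 : (tw_u2 (m+2) : ℕ) = 2 := by unfold tw_u2; exact twV_val (by omega)
  have hu3 : (tw_u3 (m+2) : ℕ) = 1 := by unfold tw_u3; exact twV_val (by omega)
  have hu4 : (tw_u4 (m+2) : ℕ) = 3 := by unfold tw_u4; exact twV_val (by omega)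
  have hv1 : (tw_v1 (m+2) : ℕ) = 3*m+5 := by
    unfold tw_v1; rw [twV_val (by omega)]; omega
  have hv2 : (tw_v2 (m+2) : ℕ) = 3*m+4 := by
    unfold tw_v2; rw [twV_val (by omega)]; omega
  have hv3 : (tw_v3 (m+2) : ℕ) = 3*m+6 := by
    unfold tw_v3; rw [twV_val (by omega)]; omega
  have hv4 : (tw_v4 (m+2) : ℕ) = 3*m+3 := by
    unfold tw_v4; rw [twV_val (by omega)]; omega
  have adj_u12 : (thomasWalls (m+2)).Adj (tw_u1 (m+2)) (tw_u2 (m+2)) := by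
    rw [adjQ, hu1, hu2]; exact ⟨by omega, Or.inl ⟨0, Or.inl ⟨rfl, rfl⟩⟩⟩
  have adj_u23 : (thomasWalls (m+2)).Adj (tw_u2 (m+2)) (tw_u3 (m+2)) := by
    rw [adjQ, hu2, hu3]
    exact ⟨by omega, Or.inr ⟨0, Or.inr (Or.inr (Or.inl ⟨rfl, rfl⟩))⟩⟩
  have adj_u34 : (thomasWalls (m+2)).Adj (tw_u3 (m+2)) (tw_u4 (m+2)) := by
    rw [adjQ, hu3, hu4]
    exact ⟨by omega, Or.inl ⟨0, Or.inr (Or.inr (Or.inr (Or.inl ⟨rfl, rfl⟩)))⟩⟩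
  have adj_u41 : (thomasWalls (m+2)).Adj (tw_u4 (m+2)) (tw_u1 (m+2)) := by
    rw [adjQ, hu4, hu1]
    exact ⟨by omega, Or.inr ⟨0, Or.inr (Or.inl ⟨rfl, rfl⟩)⟩⟩
  have adj_u13 : (thomasWalls (m+2)).Adj (tw_u1 (m+2)) (tw_u3 (m+2)) := by
    rw [adjQ, hu1, hu3]
    exact ⟨by omega, Or.inl ⟨0, Or.inr (Or.inr (Or.inr (Or.inr (Or.inl ⟨rfl, rfl⟩))))⟩⟩
  have adj_v12 : (thomasWalls (m+2)).Adj (tw_v1 (m+2)) (tw_v2 (m+2)) := by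
    rw [adjQ, hv1, hv2]
    refine ⟨by omega, Or.inr ⟨m, Or.inr (Or.inr (Or.inr (Or.inr (Or.inr (Or.inr
      ⟨le_refl m, Or.inr (Or.inr (Or.inr (Or.inl ⟨by omega, by omega⟩)))⟩)))))⟩⟩
  have adj_v23 : (thomasWalls (m+2)).Adj (tw_v2 (m+2)) (tw_v3 (m+2)) := by
    rw [adjQ, hv2, hv3]
    refine ⟨by omega, Or.inl ⟨m, Or.inr (Or.inr (Or.inr (Or.inr (Or.inr (Or.inr
      ⟨le_refl m, Or.inr (Or.inr (Or.inr (Or.inr ⟨by omega, by omega⟩)))⟩)))))⟩⟩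
  have adj_v34 : (thomasWalls (m+2)).Adj (tw_v3 (m+2)) (tw_v4 (m+2)) := by
    rw [adjQ, hv3, hv4]
    refine ⟨by omega, Or.inr ⟨m, Or.inr (Or.inr (Or.inr (Or.inr (Or.inr (Or.inr
      ⟨le_refl m, Or.inr (Or.inr (Or.inl ⟨by omega, by omega⟩))⟩)))))⟩⟩
  have adj_v41 : (thomasWalls (m+2)).Adj (tw_v4 (m+2)) (tw_v1 (m+2)) := by
    rw [adjQ, hv4, hv1]
    refine ⟨by omega, Or.inl ⟨m, Or.inr (Or.inr (Or.inr (Or.inr (Or.inr (Or.inr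
      ⟨le_refl m, Or.inr (Or.inl ⟨by omega, by omega⟩)⟩)))))⟩⟩
  have adj_v13 : (thomasWalls (m+2)).Adj (tw_v1 (m+2)) (tw_v3 (m+2)) := by
    rw [adjQ, hv1, hv3]
    exact ⟨by omega, Or.inl ⟨0, Or.inr (Or.inr (Or.inr (Or.inr (Or.inr (Or.inl
      ⟨rfl, rfl⟩)))))⟩⟩
  refine ⟨?_, ?_, adj_u12, adj_u23, adj_u34, adj_u41, adj_u13,
    adj_v12, adj_v23, adj_v34, adj_v41, adj_v13, ?_, ?_⟩
  · ext e
    refine Sym2.inductionOn e fun x y => ?_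
    simp only [Set.mem_setOf_eq, SimpleGraph.mem_edgeSet, Sym2.mem_iff, Set.mem_insert_iff,
      Set.mem_singleton_iff, Sym2.eq_iff, forall_eq_or_imp, forall_eq]
    constructor
    · rintro ⟨hxy, w, w', hww', ⟨hwx, hwy⟩, hw'x, hw'y⟩
      have exy := adjQ.1 hxy
      have ewx := adjQ.1 hwx
      have ewy := adjQ.1 hwy
      have ew'x := adjQ.1 hw'x
      have ew'y := adjQ.1 hw'y
      have nww' : (w:ℕ) ≠ (w':ℕ) := fun h => hww' (Fin.ext h)
      rcases exy.2 with hs | hs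
      · have D := CN hs ewx.2 ewy.2
        have D' := CN hs ew'x.2 ew'y.2
        have key := CN2 D D' nww' ewx.1 ewy.1 ew'x.1 ew'y.1
        rcases key with ⟨k1, k2, -, -, -, -⟩ | ⟨k1, k2, -, -, -, -⟩
        · exact Or.inl (Or.inl ⟨Fin.ext (by omega), Fin.ext (by omega)⟩)
        · exact Or.inr (Or.inl ⟨Fin.ext (by omega), Fin.ext (by omega)⟩)
      · have D := CN hs ewy.2 ewx.2
        have D' := CN hs ew'y.2 ew'x.2
        have key := CN2 D D' nww' ewy.1 ewx.1 ew'y.1 ew'x.1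
        rcases key with ⟨k1, k2, -, -, -, -⟩ | ⟨k1, k2, -, -, -, -⟩
        · exact Or.inl (Or.inr ⟨Fin.ext (by omega), Fin.ext (by omega)⟩)
        · exact Or.inr (Or.inr ⟨Fin.ext (by omega), Fin.ext (by omega)⟩)
    · rintro ((⟨rfl, rfl⟩ | ⟨rfl, rfl⟩) | (⟨rfl, rfl⟩ | ⟨rfl, rfl⟩))
      · exact ⟨adj_u13, tw_u2 (m+2), tw_u4 (m+2),
          by intro h; have := congrArg Fin.val h; omega,
          ⟨adj_u12.symm, adj_u23⟩, adj_u41, adj_u34.symm⟩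
      · exact ⟨adj_u13.symm, tw_u2 (m+2), tw_u4 (m+2),
          by intro h; have := congrArg Fin.val h; omega,
          ⟨adj_u23, adj_u12.symm⟩, adj_u34.symm, adj_u41⟩
      · exact ⟨adj_v13, tw_v2 (m+2), tw_v4 (m+2),
          by intro h; have := congrArg Fin.val h; omega,
          ⟨adj_v12.symm, adj_v23⟩, adj_v41, adj_v34.symm⟩
      · exact ⟨adj_v13.symm, tw_v2 (m+2), tw_v4 (m+2),
          by intro h; have := congrArg Fin.val h; omega,
          ⟨adj_v23, adj_v12.symm⟩, adj_v34.symm, adj_v41⟩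
  · intro h
    rw [Sym2.eq_iff] at h
    rcases h with ⟨h1, -⟩ | ⟨h1, -⟩ <;> (have := congrArg Fin.val h1; omega)
  · intro h
    have hm : tw_u1 (m+2) ∈ ({tw_v1 (m+2), tw_v2 (m+2), tw_v3 (m+2), tw_v4 (m+2)} :
        Set (Fin (3*(m+2)+1))) := h ▸ Set.mem_insert _ _
    simp only [Set.mem_insert_iff, Set.mem_singleton_iff] at hm
    rcases hm with h' | h' | h' | h' <;> (have := congrArg Fin.val h'; omega)
  · intro a b c d hab hac had hbc hbd hcd Aab Abc Acd Ada hdiag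
    have nab : (a:ℕ) ≠ (b:ℕ) := fun h => hab (Fin.ext h)
    have nac : (a:ℕ) ≠ (c:ℕ) := fun h => hac (Fin.ext h)
    have nad : (a:ℕ) ≠ (d:ℕ) := fun h => had (Fin.ext h)
    have nbc : (b:ℕ) ≠ (c:ℕ) := fun h => hbc (Fin.ext h)
    have nbd : (b:ℕ) ≠ (d:ℕ) := fun h => hbd (Fin.ext h)
    have ncd : (c:ℕ) ≠ (d:ℕ) := fun h => hcd (Fin.ext h)
    have Eab := adjQ.1 Aab
    have Ebc := adjQ.1 Abc
    have Ecd := adjQ.1 Acd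
    have Eda := adjQ.1 Ada
    rcases hdiag with Hd | Hd
    · have Eac := adjQ.1 Hd
      rcases Eac.2 with hs | hs
      · have D := CN hs (Or.symm Eab.2) Ebc.2
        have D' := CN hs Eda.2 (Or.symm Ecd.2)
        have key := CN2 D D' nbd (Ne.symm nab) nbc (Ne.symm nad) (Ne.symm ncd)
        rcases key with ⟨k1, k2, k3, k4, k5, k6⟩ | ⟨k1, k2, k3, k4, k5, k6⟩
        · exact Or.inl (set4_eq fun t => by omega)
        · exact Or.inr (set4_eq fun t => by omega)
      · have D := CN hs Ebc.2 (Or.symm Eab.2)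
        have D' := CN hs (Or.symm Ecd.2) Eda.2
        have key := CN2 D D' nbd nbc (Ne.symm nab) (Ne.symm ncd) (Ne.symm nad)
        rcases key with ⟨k1, k2, k3, k4, k5, k6⟩ | ⟨k1, k2, k3, k4, k5, k6⟩
        · exact Or.inl (set4_eq fun t => by omega)
        · exact Or.inr (set4_eq fun t => by omega)
    · have Ebd := adjQ.1 Hd
      rcases Ebd.2 with hs | hs
      · have D := CN hs Eab.2 (Or.symm Eda.2)
        have D' := CN hs (Or.symm Ebc.2) Ecd.2
        have key := CN2 D D' nac nab nad (Ne.symm nbc) ncd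
        rcases key with ⟨k1, k2, k3, k4, k5, k6⟩ | ⟨k1, k2, k3, k4, k5, k6⟩
        · exact Or.inl (set4_eq fun t => by omega)
        · exact Or.inr (set4_eq fun t => by omega)
      · have D := CN hs (Or.symm Eda.2) Eab.2
        have D' := CN hs Ecd.2 (Or.symm Ebc.2)
        have key := CN2 D D' nac nad nab ncd (Ne.symm nbc)
        rcases key with ⟨k1, k2, k3, k4, k5, k6⟩ | ⟨k1, k2, k3, k4, k5, k6⟩
        · exact Or.inl (set4_eq fun t => by omega)
        · exact Or.inr (set4_eq fun t => by omega)
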